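/- arXiv:1706.03569 — 8 statements merged into one kernel-verified Lean document; each statement's English description precedes it below -/
import Mathlib

section
/- The polynomial 31X⁴ − 36X³ + 26X² − 36X + 31 is irreducible over ℚ, and if α is a root of it, then the extension ℚ(α)/ℚ is Galois of degree 4 with Galois group cyclic of order 4. -/
/-!
Irreducibility: by Gauss's lemma it suffices to work over `ℤ`, where the quartic has leading
coefficient prime to 7 and stays irreducible modulo 7.

Galois group: for a root `α`, the cubic `r = conjPoly` maps `α` to another root, and
`r (r α) = α⁻¹ ≠ α`. So `α ↦ r α` extends to an automorphism `σ` of `ℚ(α)` with `σ² ≠ 1` and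
`σ⁴ = 1`. An automorphism of order `4 = [ℚ(α) : ℚ]` forces
`|Aut(ℚ(α)/ℚ)| = [ℚ(α) : ℚ]`, so the extension is Galois with cyclic group generated by `σ`.
-/

open Polynomial IntermediateField

namespace Polynomial

theorem IsPrimitive.irreducible_of_irreducible_map_of_natDegree_map_eq {R S : Type*} [CommRing R]
    [IsDomain R] [CommRing S] [IsDomain S] {φ : R →+* S} {f : R[X]} (hf : f.IsPrimitive)
    (hdeg : (f.map φ).natDegree = f.natDegree) (h_irr : Irreducible (f.map φ)) :
    Irreducible f := by
  refine ⟨fun hu => h_irr.not_isUnit (hu.map (mapRingHom φ)), fun a b hab => ?_⟩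
  have hab' : f.map φ = a.map φ * b.map φ := by rw [hab, Polynomial.map_mul]
  have ha0 : a.map φ ≠ 0 := left_ne_zero_of_mul (hab' ▸ h_irr.ne_zero)
  have hb0 : b.map φ ≠ 0 := right_ne_zero_of_mul (hab' ▸ h_irr.ne_zero)
  have hdeg_ab : (a.map φ).natDegree = a.natDegree ∧ (b.map φ).natDegree = b.natDegree := by
    have hmap := natDegree_mul ha0 hb0
    have hprod := natDegree_mul (p := a) (q := b) (by rintro rfl; simp at ha0)
      (by rintro rfl; simp at hb0)
    rw [← hab', hdeg] at hmap
    rw [← hab] at hprod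
    have := natDegree_map_le (f := φ) (p := a)
    have := natDegree_map_le (f := φ) (p := b)
    omega
  have isUnit_of_dvd : ∀ c : R[X], c ∣ f → (c.map φ).natDegree = c.natDegree →
      IsUnit (c.map φ) → IsUnit c := by
    intro c hc hcdeg hcu
    have hc0 : c.natDegree = 0 := hcdeg ▸ natDegree_eq_zero_of_isUnit hcu
    rw [eq_C_of_natDegree_eq_zero hc0] at hc ⊢
    exact isUnit_C.mpr (hf _ hc)
  exact (h_irr.isUnit_or_isUnit hab').imp (isUnit_of_dvd a (Dvd.intro _ hab.symm) hdeg_ab.1)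
    (isUnit_of_dvd b (Dvd.intro_left _ hab.symm) hdeg_ab.2)

theorem Monic.exists_eq_X_sq_add_C_mul_X_add_C {R : Type*} [CommSemiring R] {q : R[X]}
    (hq : q.Monic) (hdeg : q.natDegree = 2) : ∃ a b : R, q = X ^ 2 + C a * X + C b :=
  ⟨q.coeff 1, q.coeff 0, by
    conv_lhs => rw [hq.as_sum, hdeg]
    simp only [Finset.sum_range_succ, Finset.sum_range_zero, pow_zero, pow_one, mul_one]
    ring⟩

theorem Monic.irreducible_of_natDegree_eq_four {K : Type*} [Field K] {f : K[X]} (hm : f.Monic)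
    (hdeg : f.natDegree = 4) (hroot : ∀ x, f.eval x ≠ 0)
    (hquad : ∀ a b c d : K, a + c = f.coeff 3 → b + d + a * c = f.coeff 2 →
      a * d + b * c = f.coeff 1 → b * d ≠ f.coeff 0) :
    Irreducible f := by
  rw [hm.irreducible_iff_natDegree', hdeg]
  refine ⟨fun h => by simp [h] at hdeg, fun g h hg hh hgh hdeg_h => ?_⟩
  have hsum : g.natDegree + h.natDegree = 4 := by rw [← hg.natDegree_mul hh, hgh, hdeg]
  obtain hh1 | hh2 : h.natDegree = 1 ∨ h.natDegree = 2 := by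
    simp only [Nat.reduceDiv, Finset.mem_Ioc] at hdeg_h
    omega
  · apply hroot (-h.coeff 0)
    rw [← hgh, eval_mul, hh.eq_X_add_C hh1]
    simp
  obtain ⟨a, b, rfl⟩ := hg.exists_eq_X_sq_add_C_mul_X_add_C (by omega)
  obtain ⟨c, d, rfl⟩ := hh.exists_eq_X_sq_add_C_mul_X_add_C hh2
  have hexp : (X ^ 2 + C a * X + C b) * (X ^ 2 + C c * X + C d) = X ^ 4 + C (a + c) * X ^ 3 +
      C (b + d + a * c) * X ^ 2 + C (a * d + b * c) * X + C (b * d) := by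
    simp only [map_add, map_mul]
    ring
  rw [← hgh, hexp] at hquad
  simp only [coeff_add, coeff_C_mul, coeff_X_pow, coeff_C, coeff_X] at hquad
  norm_num at hquad
  exact hquad a b c d rfl rfl rfl rfl

end Polynomial

noncomputable def quarticInt : ℤ[X] := C 31 * X ^ 4 - C 36 * X ^ 3 + C 26 * X ^ 2 - C 36 * X + C 31

noncomputable def quartic : ℚ[X] := C 31 * X ^ 4 - C 36 * X ^ 3 + C 26 * X ^ 2 - C 36 * X + C 31

lemma quarticInt_isPrimitive : quarticInt.IsPrimitive := by
  intro r hr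
  rw [C_dvd_iff_dvd_coeff] at hr
  have h31 : r ∣ 31 := by simpa [quarticInt] using hr 0
  have h36 : r ∣ -36 := by simpa [quarticInt] using hr 1
  exact isUnit_of_dvd_one (by simpa using dvd_add (h31.mul_left 7) (h36.mul_left 6))

lemma natDegree_quarticInt : quarticInt.natDegree = 4 := by
  unfold quarticInt
  compute_degree!

lemma map_quarticInt_zmod_seven : quarticInt.map (Int.castRingHom (ZMod 7)) =
    C 3 * (X ^ 4 + C 2 * X ^ 3 + C 4 * X ^ 2 + C 2 * X + 1) := by
  simp only [quarticInt, Polynomial.map_sub, Polynomial.map_add, Polynomial.map_mul,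
    Polynomial.map_pow, map_X, Polynomial.map_ofNat, map_ofNat]
  ring_nf
  reduce_mod_char
  ring

instance fact_prime_seven : Fact (Nat.Prime 7) := ⟨by norm_num⟩

lemma irreducible_quartic_zmod_seven :
    Irreducible (X ^ 4 + C 2 * X ^ 3 + C 4 * X ^ 2 + C 2 * X + 1 : (ZMod 7)[X]) := by
  have hm : (X ^ 4 + C 2 * X ^ 3 + C 4 * X ^ 2 + C 2 * X + 1 : (ZMod 7)[X]).Monic := by monicity!
  refine hm.irreducible_of_natDegree_eq_four (by compute_degree!) ?_ ?_
  · simp only [eval_add, eval_mul, eval_pow, eval_C, eval_X, eval_one]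
    decide
  · simp only [coeff_add, coeff_C_mul, coeff_X_pow, coeff_X, coeff_one]
    decide

lemma irreducible_quarticInt : Irreducible quarticInt := by
  have h7 : (quarticInt.map (Int.castRingHom (ZMod 7))).natDegree = 4 := by
    rw [map_quarticInt_zmod_seven]
    compute_degree!
  refine quarticInt_isPrimitive.irreducible_of_irreducible_map_of_natDegree_map_eq
    (h7.trans natDegree_quarticInt.symm) ?_
  rw [map_quarticInt_zmod_seven]
  exact (irreducible_isUnit_mul (isUnit_C.mpr (by decide))).mpr irreducible_quartic_zmod_seven

lemma irreducible_quartic : Irreducible quartic := by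
  have hmap : quarticInt.map (Int.castRingHom ℚ) = quartic := by
    simp [quarticInt, quartic, map_ofNat]
  exact hmap ▸ (IsPrimitive.Int.irreducible_iff_irreducible_map_cast quarticInt_isPrimitive).mp
    irreducible_quarticInt

lemma natDegree_quartic : quartic.natDegree = 4 := by
  unfold quartic
  compute_degree!

noncomputable def conjPoly : ℚ[X] :=
  C (5 / 12) - C (25 / 124) * X - C (295 / 372) * X ^ 2 - C (1 / 4) * X ^ 3

section Roots

variable {E : Type*} [Field E] [CharZero E] {x : E}

lemma aeval_quartic (x : E) :
    aeval x quartic = 31 * x ^ 4 - 36 * x ^ 3 + 26 * x ^ 2 - 36 * x + 31 := by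
  simp [quartic, map_ofNat]

lemma aeval_conjPoly (x : E) :
    aeval x conjPoly = 5 / 12 - 25 / 124 * x - 295 / 372 * x ^ 2 - 1 / 4 * x ^ 3 := by
  simp [conjPoly, map_ofNat, map_div₀]

-- The cofactors below are the quotients of dividing by the quartic.

lemma aeval_quartic_aeval_conjPoly (hx : aeval x quartic = 0) :
    aeval (aeval x conjPoly) quartic = 0 := by
  rw [aeval_quartic] at hx ⊢
  rw [aeval_conjPoly]
  linear_combination (390751 / 642816 + 716339 / 830304 * x + 173947925 / 154436544 * x ^ 2
    + 41640151 / 25739424 * x ^ 3 + 492243077 / 308873088 * x ^ 4 + 23873891 / 25739424 * x ^ 5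
    + 56825 / 184512 * x ^ 6 + 161 / 2976 * x ^ 7 + 1 / 256 * x ^ 8) * hx

lemma mul_aeval_aeval_conjPoly (hx : aeval x quartic = 0) :
    x * aeval (aeval x conjPoly) conjPoly = 1 := by
  rw [aeval_quartic] at hx
  rw [aeval_conjPoly, aeval_conjPoly]
  linear_combination (-1 / 31 - 70309 / 2214144 * x - 230975 / 68638464 * x ^ 2
    + 948005 / 102957696 * x ^ 3 + 63665 / 11439744 * x ^ 4 + 331 / 246016 * x ^ 5
    + 1 / 7936 * x ^ 6) * hx

lemma sq_ne_one_of_aeval_quartic (hx : aeval x quartic = 0) : x ^ 2 ≠ 1 := by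
  rw [aeval_quartic] at hx
  intro h
  -- once `x ^ 2 = 1`, the quartic relation reads `88 - 72 * x = 0`
  have hx' : x = 11 / 9 := by
    linear_combination (-1 / 72) * hx + (31 * x ^ 2 - 36 * x + 57) / 72 * h
  rw [hx'] at h
  norm_num at h

lemma minpoly_eq_of_aeval_quartic (hx : aeval x quartic = 0) :
    minpoly ℚ x = quartic * C quartic.leadingCoeff⁻¹ :=
  (minpoly.eq_of_irreducible irreducible_quartic hx).symm

lemma finrank_adjoin_of_aeval_quartic (hx : aeval x quartic = 0) :
    Module.finrank ℚ ℚ⟮x⟯ = 4 := by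
  have hq0 := irreducible_quartic.ne_zero
  rw [adjoin.finrank (IsAlgebraic.isIntegral ⟨quartic, hq0, hx⟩), minpoly_eq_of_aeval_quartic hx,
    natDegree_mul_C (inv_ne_zero (leadingCoeff_ne_zero.mpr hq0)), natDegree_quartic]

end Roots

namespace IntermediateField

variable {F E : Type*} [Field F] [Field E] [Algebra F E] {α : E}

lemma adjoin_simple_algEquiv_ext {σ τ : F⟮α⟯ ≃ₐ[F] F⟮α⟯}
    (h : σ (AdjoinSimple.gen F α) = τ (AdjoinSimple.gen F α)) : σ = τ :=
  AlgEquiv.coe_toAlgHom_injective <| adjoin_algHom_ext F fun x hx => by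
    obtain rfl := Set.mem_singleton_iff.mp hx
    exact h

lemma exists_algEquiv_adjoin_simple_gen_eq (hα : IsIntegral F α) {β : F⟮α⟯}
    (hβ : aeval β (minpoly F α) = 0) :
    ∃ σ : F⟮α⟯ ≃ₐ[F] F⟮α⟯, σ (AdjoinSimple.gen F α) = β := by
  have : FiniteDimensional F F⟮α⟯ := adjoin.finiteDimensional hα
  let φ := (algHomAdjoinIntegralEquiv F hα).symm ⟨β, mem_aroots.mpr ⟨minpoly.ne_zero hα, hβ⟩⟩
  exact ⟨AlgEquiv.ofBijective φ φ.bijective, algHomAdjoinIntegralEquiv_symm_apply_gen F hα _⟩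

lemma exists_algEquiv_orderOf_eq_four (hα : IsIntegral F α) {r : F[X]}
    (hr : aeval (aeval α r) (minpoly F α) = 0) (hrr : α * aeval (aeval α r) r = 1)
    (hsq : α ^ 2 ≠ 1) : ∃ σ : F⟮α⟯ ≃ₐ[F] F⟮α⟯, orderOf σ = 4 := by
  set g := AdjoinSimple.gen F α
  have inj := (algebraMap F⟮α⟯ E).injective
  have hg : algebraMap F⟮α⟯ E g = α := AdjoinSimple.algebraMap_gen F α
  obtain ⟨σ, hσ⟩ := exists_algEquiv_adjoin_simple_gen_eq hα (β := aeval g r) <| inj <| by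
    rw [← aeval_algebraMap_apply, ← aeval_algebraMap_apply, hg, hr, map_zero]
  have hσ2 : g * (σ ^ 2) g = 1 := inj <| by
    rw [pow_two, AlgEquiv.mul_apply, hσ, ← aeval_algHom_apply, hσ, map_mul, map_one,
      ← aeval_algebraMap_apply, ← aeval_algebraMap_apply, hg, hrr]
  have hσ4 : σ ^ 4 = 1 := adjoin_simple_algEquiv_ext <| by
    have h := congrArg (⇑(σ ^ 2)) hσ2
    rw [map_mul, map_one, ← AlgEquiv.mul_apply, ← pow_add] at h
    exact (left_inv_eq_right_inv hσ2 h).symm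
  have hσ2_ne : σ ^ 2 ≠ 1 := fun h => hsq <| by
    rw [h, AlgEquiv.one_apply] at hσ2
    rw [← hg, ← map_pow, sq, hσ2, map_one]
  exact ⟨σ, orderOf_eq_prime_pow (p := 2) (n := 1) hσ2_ne hσ4⟩

end IntermediateField

lemma AlgEquiv.card_eq_finrank_of_orderOf_eq {F K : Type*} [Field F] [Field K] [Algebra F K]
    [FiniteDimensional F K] (σ : K ≃ₐ[F] K) (hσ : orderOf σ = Module.finrank F K) :
    Nat.card (K ≃ₐ[F] K) = Module.finrank F K :=
  le_antisymm (Nat.card_eq_fintype_card (α := K ≃ₐ[F] K) ▸ AlgEquiv.card_le) (hσ ▸ orderOf_le_card)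

lemma exists_algEquiv_orderOf_eq_four_of_aeval_quartic {E : Type*} [Field E] [CharZero E] {α : E}
    (hα : aeval α quartic = 0) : ∃ σ : ℚ⟮α⟯ ≃ₐ[ℚ] ℚ⟮α⟯, orderOf σ = 4 :=
  exists_algEquiv_orderOf_eq_four
    (IsAlgebraic.isIntegral ⟨quartic, irreducible_quartic.ne_zero, hα⟩)
    (by rw [minpoly_eq_of_aeval_quartic hα, map_mul, aeval_quartic_aeval_conjPoly hα, zero_mul])
    (mul_aeval_aeval_conjPoly hα) (sq_ne_one_of_aeval_quartic hα)

/-- The polynomial `31X⁴ - 36X³ + 26X² - 36X + 31` is irreducible over `ℚ`, and for any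
root `α` of it in `ℚ̄`, the extension `ℚ(α)/ℚ` is Galois of degree `4` with cyclic
Galois group of order `4`. -/
theorem stmt_1 :
    Irreducible (C 31 * X ^ 4 - C 36 * X ^ 3 + C 26 * X ^ 2 - C 36 * X + C 31 : ℚ[X]) ∧
    ∀ α : AlgebraicClosure ℚ,
      aeval α (C 31 * X ^ 4 - C 36 * X ^ 3 + C 26 * X ^ 2 - C 36 * X + C 31 : ℚ[X]) = 0 →
      IsGalois ℚ ↥(IntermediateField.adjoin ℚ ({α} : Set (AlgebraicClosure ℚ))) ∧
      Module.finrank ℚ ↥(IntermediateField.adjoin ℚ ({α} : Set (AlgebraicClosure ℚ))) = 4 ∧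
      IsCyclic (↥(IntermediateField.adjoin ℚ ({α} : Set (AlgebraicClosure ℚ))) ≃ₐ[ℚ]
        ↥(IntermediateField.adjoin ℚ ({α} : Set (AlgebraicClosure ℚ)))) ∧
      Nat.card (↥(IntermediateField.adjoin ℚ ({α} : Set (AlgebraicClosure ℚ))) ≃ₐ[ℚ]
        ↥(IntermediateField.adjoin ℚ ({α} : Set (AlgebraicClosure ℚ)))) = 4 := by
  refine ⟨irreducible_quartic, fun α hα => ?_⟩
  have hrank : Module.finrank ℚ ℚ⟮α⟯ = 4 := finrank_adjoin_of_aeval_quartic hα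
  have : FiniteDimensional ℚ ℚ⟮α⟯ := Module.finite_of_finrank_eq_succ hrank
  obtain ⟨σ, hσ⟩ := exists_algEquiv_orderOf_eq_four_of_aeval_quartic hα
  have hcard := σ.card_eq_finrank_of_orderOf_eq (hσ.trans hrank.symm)
  exact ⟨IsGalois.of_card_aut_eq_finrank _ _ hcard, hrank,
    isCyclic_of_orderOf_eq_card σ (hcard.trans (hrank.trans hσ.symm)).symm, hcard.trans hrank⟩
end

section
/- Let K be a number field of degree 4 over ℚ and let x, y ∈ K with xy ≠ 0, x⁵ + y⁵ + 1 = 0, and ℚ(x, y) = K. Suppose the affine point (x, y) lies on a line defined over ℚ through the point (0, −1), i.e., there exist λ, μ ∈ ℚ, not both zero, with λx + μ(y+1) = 0. Then K = ℚ(y), and there exists t ∈ ℚ with t ≠ −1 such that x = t(y+1) and y⁴ + u y³ + (u+2) y² + u y + 1 = 0, where u = (4t⁵ − 1)/(t⁵ + 1). -/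
/-!
Clearing denominators in the rational line gives `x = t (y + 1)` with `t ∈ ℚ`, so `ℚ(y) = ℚ(x, y)`.
Substituting into the quintic, `t⁵(y + 1)⁵ + y⁵ + 1` is divisible by `y + 1`, leaving a palindromic
quartic in `y` with leading coefficient `t⁵ + 1`. For `t = -1` that quartic is `-5y(y² + y + 1)`,
which would make `y` of degree at most 2 over `ℚ`; so `t⁵ + 1 ≠ 0` and we may divide by it.
-/

open IntermediateField
open Polynomial (X aeval)
open scoped Polynomial

def lineQuartic {R : Type*} [CommRing R] (s y : R) : R :=
  (s + 1) * y ^ 4 + (4 * s - 1) * y ^ 3 + (6 * s + 1) * y ^ 2 + (4 * s - 1) * y + (s + 1)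

section lineQuartic

variable {R : Type*} [CommRing R]

lemma fermat_quintic_mul_add_one (a y : R) :
    (a * (y + 1)) ^ 5 + y ^ 5 + 1 = (y + 1) * lineQuartic (a ^ 5) y := by
  unfold lineQuartic; ring

lemma lineQuartic_neg_one (y : R) : lineQuartic (-1) y = -5 * y * (y ^ 2 + y + 1) := by
  unfold lineQuartic; ring

lemma lineQuartic_eq_mul {K : Type*} [Field K] {s : K} (hs : s + 1 ≠ 0) (y : K) :
    lineQuartic s y = (s + 1) * (y ^ 4 + (4 * s - 1) / (s + 1) * y ^ 3 +
      ((4 * s - 1) / (s + 1) + 2) * y ^ 2 + (4 * s - 1) / (s + 1) * y + 1) := by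
  unfold lineQuartic; field_simp; ring

end lineQuartic

section FieldTheory

variable {F E : Type*} [Field F] [Field E] [Algebra F E]

lemma eq_algebraMap_mul_of_add_eq_zero {x z : E} (hz : z ≠ 0) {l m : F} (hlm : l ≠ 0 ∨ m ≠ 0)
    (h : algebraMap F E l * x + algebraMap F E m * z = 0) :
    x = algebraMap F E (-m / l) * z := by
  have hl : l ≠ 0 := by
    rintro rfl
    simp_all
  have hl' : algebraMap F E l ≠ 0 := (map_ne_zero _).mpr hl
  rw [map_div₀, map_neg]
  field_simp
  linear_combination h

lemma adjoin_pair_eq_adjoin_simple {x y : E} (hx : x ∈ F⟮y⟯) :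
    adjoin F ({x, y} : Set E) = F⟮y⟯ :=
  le_antisymm (adjoin_le_iff.mpr (Set.insert_subset hx (by simp)))
    (adjoin.mono F _ _ (Set.subset_insert x {y}))

lemma finrank_adjoin_simple_le_natDegree {y : E} {p : F[X]} (hp : p ≠ 0) (hy : aeval y p = 0) :
    Module.finrank F F⟮y⟯ ≤ p.natDegree := by
  rw [adjoin.finrank (IsAlgebraic.isIntegral ⟨p, hp, hy⟩)]
  exact Polynomial.natDegree_le_natDegree (minpoly.degree_le_of_ne_zero F y hp hy)

end FieldTheory

/-- If `K` is a quartic number field, `(x, y)` an affine point of the Fermat quintic with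
`xy ≠ 0` and `ℚ(x,y) = K`, lying on a rational line through `(0, -1)`, then `K = ℚ(y)`
and there is `t ∈ ℚ`, `t ≠ -1`, with `x = t(y+1)` and
`y⁴ + uy³ + (u+2)y² + uy + 1 = 0` where `u = (4t⁵-1)/(t⁵+1)`. -/
theorem stmt_6 (K : Type*) [Field K] [NumberField K]
    (hdeg : Module.finrank ℚ K = 4)
    (x y : K) (hxy : x * y ≠ 0) (hF : x ^ 5 + y ^ 5 + 1 = 0)
    (hgen : IntermediateField.adjoin ℚ ({x, y} : Set K) = ⊤)
    (hline : ∃ l m : ℚ, (l ≠ 0 ∨ m ≠ 0) ∧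
      algebraMap ℚ K l * x + algebraMap ℚ K m * (y + 1) = 0) :
    IntermediateField.adjoin ℚ ({y} : Set K) = ⊤ ∧
    ∃ t : ℚ, t ≠ -1 ∧ x = algebraMap ℚ K t * (y + 1) ∧
      y ^ 4 + algebraMap ℚ K ((4 * t ^ 5 - 1) / (t ^ 5 + 1)) * y ^ 3 +
        algebraMap ℚ K ((4 * t ^ 5 - 1) / (t ^ 5 + 1) + 2) * y ^ 2 +
        algebraMap ℚ K ((4 * t ^ 5 - 1) / (t ^ 5 + 1)) * y + 1 = 0 := by
  have hy1 : y + 1 ≠ 0 := by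
    intro h
    have hx5 : x ^ 5 = 0 := by linear_combination hF - (y ^ 4 - y ^ 3 + y ^ 2 - y + 1) * h
    exact left_ne_zero_of_mul hxy (pow_eq_zero_iff (by norm_num) |>.mp hx5)
  obtain ⟨l, m, hlm, hl⟩ := hline
  set t : ℚ := -m / l
  have hx : x = algebraMap ℚ K t * (y + 1) := eq_algebraMap_mul_of_add_eq_zero hy1 hlm hl
  have hx_mem : x ∈ ℚ⟮y⟯ := hx ▸ mul_mem (IntermediateField.algebraMap_mem _ _)
    (add_mem (mem_adjoin_simple_self ℚ y) (one_mem _))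
  have hKy : ℚ⟮y⟯ = ⊤ := by rw [← hgen, adjoin_pair_eq_adjoin_simple hx_mem]
  have hQ : lineQuartic (algebraMap ℚ K t ^ 5) y = 0 := by
    have h := fermat_quintic_mul_add_one (algebraMap ℚ K t) y
    rw [← hx, hF] at h
    exact (mul_eq_zero.mp h.symm).resolve_left hy1
  have ht : t ≠ -1 := by
    intro ht
    rw [ht, map_neg, map_one, Odd.neg_one_pow (by decide), lineQuartic_neg_one] at hQ
    have hy : aeval y (X ^ 2 + X + 1 : ℚ[X]) = 0 := by
      simpa [right_ne_zero_of_mul hxy] using hQ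
    have hdeg2 : (X ^ 2 + X + 1 : ℚ[X]).natDegree = 2 := by compute_degree!
    have hle := finrank_adjoin_simple_le_natDegree
      (Polynomial.ne_zero_of_natDegree_gt (n := 0) (by omega)) hy
    rw [hKy, finrank_top', hdeg, hdeg2] at hle
    omega
  have ht5 : t ^ 5 + 1 ≠ 0 := fun h ↦
    ht ((Odd.pow_inj (n := 5) (by decide)).mp (by linear_combination h))
  have hs : algebraMap ℚ K t ^ 5 + 1 ≠ 0 := by
    rw [← map_pow, ← map_one (algebraMap ℚ K), ← map_add]
    exact (map_ne_zero _).mpr ht5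
  refine ⟨hKy, t, ht, hx, ?_⟩
  rw [lineQuartic_eq_mul hs] at hQ
  simpa [map_div₀] using (mul_eq_zero.mp hQ).resolve_left hs
end

section
/- Let K be a number field that is Galois of degree 4 over ℚ, and let x, y ∈ K with xy ≠ 0, x⁵ + y⁵ + 1 = 0, and ℚ(x, y) = K. Let t ∈ ℚ be such that x = t(y+1). Then at least one of the following holds: (1) 5(16t⁵ + 1) is a square in ℚ; (2) (1 − 4t⁵)(16t⁵ + 1) is a square in ℚ. -/
/-!
Eliminating `x` leaves `y⁴ - y³ + y² - y + 1 + t⁵(y + 1)⁴ = 0`, a palindromic quartic, so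
`w = y + y⁻¹` satisfies `a w² + b w + b = 0` with `a = t⁵ + 1`, `b = 4t⁵ - 1`, and
`K = ℚ(w, θ)` with `θ = y - y⁻¹`, `θ² = w² - 4`. As `y` has degree 4, `w ∉ ℚ`, so some `σ`
moves `w`; by Vieta `z = θ · σθ` has `a² z² = 5(16t⁵ + 1)`, and `v = 2aw + b` has
`v² = 5(1 - 4t⁵)`. A group of order 4 is abelian, so every automorphism fixing `v` (hence `w`,
hence `θ` up to sign) fixes `z`. Since `z²` and `v²` are rational, every automorphism sends
`z ↦ ±z` and `v ↦ ±v`; so `z` is fixed by the whole Galois group or by exactly the stabiliser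
of `v`, i.e. `z ∈ ℚ` or `zv ∈ ℚ`.
-/

open IntermediateField Polynomial Module

section Quadratic

variable {L : Type*} [Field L]

theorem vieta_of_ne {a b c x x' : L} (hx : a * x ^ 2 + b * x + c = 0)
    (hx' : a * x' ^ 2 + b * x' + c = 0) (hne : x ≠ x') :
    a * (x + x') = -b ∧ a * (x * x') = c := by
  have hsum : a * (x + x') + b = 0 := by
    have : (x - x') * (a * (x + x') + b) = 0 := by linear_combination hx - hx'
    exact (mul_eq_zero.mp this).resolve_left (sub_ne_zero.mpr hne)
  exact ⟨by linear_combination hsum, by linear_combination x * hsum - hx⟩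

theorem sq_mul_sq_sub_four_mul_sq_sub_four {a b c x x' : L} (hsum : a * (x + x') = -b)
    (hprod : a * (x * x') = c) :
    a ^ 2 * ((x ^ 2 - 4) * (x' ^ 2 - 4)) = c ^ 2 - 4 * b ^ 2 + 8 * a * c + 16 * a ^ 2 := by
  linear_combination (a * (x * x') + c + 8 * a) * hprod - 4 * (a * (x + x') - b) * hsum

end Quadratic

section Galois

variable {F K : Type*} [Field F] [Field K] [Algebra F K]

theorem sq_add_mul_add_ne_zero_of_two_lt_finrank {y : K} (hy : 2 < finrank F F⟮y⟯)
    (b c : F) : y ^ 2 + algebraMap F K b * y + algebraMap F K c ≠ 0 := by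
  intro h
  have hp : (X ^ 2 + C b * X + C c : F[X]).Monic := by monicity!
  have hroot : aeval y (X ^ 2 + C b * X + C c) = 0 := by simpa [Algebra.smul_def] using h
  rw [adjoin.finrank ⟨_, hp, hroot⟩] at hy
  have hle := natDegree_le_natDegree (minpoly.min F y hp hroot)
  have : (X ^ 2 + C b * X + C c : F[X]).natDegree ≤ 2 := by compute_degree
  omega

theorem adjoin_simple_eq_top_of_adjoin_pair_eq_top {x y : K} (hx : x ∈ F⟮y⟯)
    (h : F⟮x, y⟯ = ⊤) : F⟮y⟯ = ⊤ :=
  eq_top_iff.mpr (h ▸ adjoin_le_iff.mpr (Set.insert_subset hx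
    (Set.singleton_subset_iff.mpr (mem_adjoin_simple_self F y))))

theorem AlgEquiv.apply_eq_or_eq_neg_of_sq_mem_bot {z : K}
    (hz : z ^ 2 ∈ (⊥ : IntermediateField F K)) (g : K ≃ₐ[F] K) : g z = z ∨ g z = -z := by
  obtain ⟨a, ha⟩ := mem_bot.mp hz
  exact eq_or_eq_neg_of_sq_eq_sq _ _ (by rw [← map_pow, ← ha, g.commutes])

theorem AlgEquiv.apply_mul_apply_eq_of_commute {θ : K} {g σ : K ≃ₐ[F] K} (hgσ : Commute g σ)
    (hg : g (θ ^ 2) = θ ^ 2) : g (θ * σ θ) = θ * σ θ := by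
  have hcomm : g (σ θ) = σ (g θ) := by rw [← AlgEquiv.mul_apply, hgσ.eq, AlgEquiv.mul_apply]
  rw [map_pow] at hg
  rcases eq_or_eq_neg_of_sq_eq_sq _ _ hg with h | h <;> simp [hcomm, h]

variable [FiniteDimensional F K] [IsGalois F K]

theorem AlgEquiv.commute_of_finrank_eq_four (h : finrank F K = 4) (g σ : K ≃ₐ[F] K) :
    Commute g σ := by
  have hcard : Nat.card (K ≃ₐ[F] K) = 2 ^ 2 := by rw [IsGalois.card_aut_eq_finrank, h]; rfl
  exact (IsPGroup.isMulCommutative_of_card_eq_prime_sq hcard).is_comm.comm g σ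

theorem mem_bot_or_mul_mem_bot {z v : K} (hz : z ^ 2 ∈ (⊥ : IntermediateField F K))
    (hv : v ^ 2 ∈ (⊥ : IntermediateField F K))
    (hfix : ∀ g : K ≃ₐ[F] K, g v = v → g z = z) :
    z ∈ (⊥ : IntermediateField F K) ∨ z * v ∈ (⊥ : IntermediateField F K) := by
  simp only [IsGalois.mem_bot_iff_fixed]
  by_contra! ⟨⟨τ, hτ⟩, ⟨g, hg⟩⟩
  have hτv : τ v = -v :=
    (τ.apply_eq_or_eq_neg_of_sq_mem_bot hv).resolve_left (mt (hfix τ) hτ)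
  rcases g.apply_eq_or_eq_neg_of_sq_mem_bot hv with hgv | hgv
  · exact hg (by rw [map_mul, hfix g hgv, hgv])
  · have hτgz : τ (g z) = z :=
      hfix (τ * g) (by rw [AlgEquiv.mul_apply, hgv, map_neg, hτv, neg_neg])
    rcases g.apply_eq_or_eq_neg_of_sq_mem_bot hz with hgz | hgz
    · exact hτ (by rwa [hgz] at hτgz)
    · exact hg (by rw [map_mul, hgz, hgv, neg_mul_neg])

theorem mul_apply_mem_bot_or_mul_mem_bot (hK : finrank F K = 4) {θ v : K} (σ : K ≃ₐ[F] K)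
    (hz : (θ * σ θ) ^ 2 ∈ (⊥ : IntermediateField F K))
    (hv : v ^ 2 ∈ (⊥ : IntermediateField F K))
    (hθ : ∀ g : K ≃ₐ[F] K, g v = v → g (θ ^ 2) = θ ^ 2) :
    θ * σ θ ∈ (⊥ : IntermediateField F K) ∨
      θ * σ θ * v ∈ (⊥ : IntermediateField F K) :=
  mem_bot_or_mul_mem_bot hz hv fun g hg =>
    g.apply_mul_apply_eq_of_commute (AlgEquiv.commute_of_finrank_eq_four hK g σ) (hθ g hg)

theorem exists_sq_eq_or_exists_sq_eq_mul_discrim (hK : finrank F K = 4) (h2 : (2 : F) ≠ 0)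
    {a b c : F} (ha : a ≠ 0) {y : K}
    (hroot : algebraMap F K a * (y + y⁻¹) ^ 2 + algebraMap F K b * (y + y⁻¹)
      + algebraMap F K c = 0)
    (hbot : y + y⁻¹ ∉ (⊥ : IntermediateField F K)) :
    (∃ s : F, s ^ 2 = c ^ 2 - 4 * b ^ 2 + 8 * a * c + 16 * a ^ 2) ∨
    (∃ s : F, s ^ 2 = (c ^ 2 - 4 * b ^ 2 + 8 * a * c + 16 * a ^ 2) * discrim a b c) := by
  set w := y + y⁻¹
  set θ := y - y⁻¹
  set v := algebraMap F K (2 * a) * w + algebraMap F K b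
  have hy : y ≠ 0 := by rintro rfl; simp [w] at hbot
  obtain ⟨σ, hσ⟩ : ∃ σ : K ≃ₐ[F] K, σ w ≠ w := by
    simpa [IsGalois.mem_bot_iff_fixed] using hbot
  obtain ⟨hsum, hprod⟩ := vieta_of_ne hroot (by simpa using congrArg σ hroot) hσ.symm
  have hθ : θ ^ 2 = w ^ 2 - 4 := by simp only [θ, w]; field_simp; ring
  have hz : (θ * σ θ) ^ 2
      = algebraMap F K ((c ^ 2 - 4 * b ^ 2 + 8 * a * c + 16 * a ^ 2) / a ^ 2) := by
    rw [mul_pow, ← map_pow, hθ, map_sub, map_pow, map_ofNat, map_div₀, map_pow,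
      eq_div_iff (pow_ne_zero 2 ((map_ne_zero (algebraMap F K)).mpr ha)), mul_comm,
      sq_mul_sq_sub_four_mul_sq_sub_four hsum hprod]
    simp [map_ofNat]
  have hv : v ^ 2 = algebraMap F K (discrim a b c) := by
    simp only [v, discrim, map_sub, map_mul, map_pow, map_ofNat]
    linear_combination 4 * algebraMap F K a * hroot
  have hfix : ∀ g : K ≃ₐ[F] K, g v = v → g (θ ^ 2) = θ ^ 2 := by
    intro g hg
    simp only [v, map_add, map_mul, map_ofNat, AlgEquiv.commutes, add_left_inj] at hg
    rw [hθ, map_sub, map_pow, mul_left_cancel₀ _ hg, map_ofNat]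
    rw [← map_ofNat (algebraMap F K) 2, ← map_mul]
    exact (map_ne_zero (algebraMap F K)).mpr (mul_ne_zero h2 ha)
  rcases mul_apply_mem_bot_or_mul_mem_bot hK σ (hz ▸ IntermediateField.algebraMap_mem _ _)
    (hv ▸ IntermediateField.algebraMap_mem _ _) hfix with hmem | hmem
  · obtain ⟨q, hq⟩ := mem_bot.mp hmem
    refine Or.inl ⟨q * a, (algebraMap F K).injective ?_⟩
    rw [map_pow, map_mul, hq, mul_pow, hz, ← map_pow, ← map_mul]
    congr 1
    field_simp
  · obtain ⟨q, hq⟩ := mem_bot.mp hmem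
    refine Or.inr ⟨q * a, (algebraMap F K).injective ?_⟩
    rw [map_pow, map_mul, hq, mul_pow, mul_pow, hz, hv, ← map_pow, ← map_mul, ← map_mul]
    congr 1
    field_simp

end Galois

section FermatLine

variable {L : Type*} [Field L] {T y : L}

theorem fermat_line_quartic (hF : (T * (y + 1)) ^ 5 + y ^ 5 + 1 = 0) (hy : y + 1 ≠ 0) :
    T ^ 5 * (y + 1) ^ 4 + (y ^ 4 - y ^ 3 + y ^ 2 - y + 1) = 0 := by
  have : (y + 1) * (T ^ 5 * (y + 1) ^ 4 + (y ^ 4 - y ^ 3 + y ^ 2 - y + 1)) = 0 := by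
    linear_combination hF
  exact (mul_eq_zero.mp this).resolve_left hy

theorem fermat_line_inv_add (hQ : T ^ 5 * (y + 1) ^ 4 + (y ^ 4 - y ^ 3 + y ^ 2 - y + 1) = 0)
    (hy : y ≠ 0) :
    (T ^ 5 + 1) * (y + y⁻¹) ^ 2 + (4 * T ^ 5 - 1) * (y + y⁻¹) + (4 * T ^ 5 - 1) = 0 := by
  field_simp
  linear_combination hQ

theorem fermat_line_of_pow_five_eq_neg_one
    (hQ : T ^ 5 * (y + 1) ^ 4 + (y ^ 4 - y ^ 3 + y ^ 2 - y + 1) = 0) (hT : T ^ 5 + 1 = 0) :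
    5 * y * (y ^ 2 + y + 1) = 0 := by
  linear_combination (y + 1) ^ 4 * hT - hQ

end FermatLine

/-- If `K` is a Galois quartic number field containing a non-trivial affine point
`(x, y)` of the Fermat quintic generating `K`, lying on the rational line `x = t(y+1)`,
then `5(16t⁵+1)` or `(1-4t⁵)(16t⁵+1)` is a square in `ℚ`. -/
theorem stmt_9 (K : Type*) [Field K] [NumberField K] [IsGalois ℚ K]
    (hdeg : Module.finrank ℚ K = 4)
    (x y : K) (hxy : x * y ≠ 0) (hF : x ^ 5 + y ^ 5 + 1 = 0)
    (hgen : IntermediateField.adjoin ℚ ({x, y} : Set K) = ⊤)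
    (t : ℚ) (ht : x = algebraMap ℚ K t * (y + 1)) :
    (∃ s : ℚ, s ^ 2 = 5 * (16 * t ^ 5 + 1)) ∨
    (∃ s : ℚ, s ^ 2 = (1 - 4 * t ^ 5) * (16 * t ^ 5 + 1)) := by
  have hy0 : y ≠ 0 := right_ne_zero_of_mul hxy
  have hy1 : y + 1 ≠ 0 := fun h => left_ne_zero_of_mul hxy (by rw [ht, h, mul_zero])
  have hyK : ℚ⟮y⟯ = ⊤ := adjoin_simple_eq_top_of_adjoin_pair_eq_top
    (ht ▸ mul_mem (IntermediateField.algebraMap_mem _ t)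
      (add_mem (mem_adjoin_simple_self ℚ y) (one_mem _))) hgen
  have hquad := sq_add_mul_add_ne_zero_of_two_lt_finrank (F := ℚ)
    (by rw [hyK, finrank_top', hdeg]; norm_num : 2 < finrank ℚ ℚ⟮y⟯)
  have hQ := fermat_line_quartic (ht ▸ hF) hy1
  have hA : t ^ 5 + 1 ≠ 0 := fun h => hquad 1 1 <| by
    have hT : algebraMap ℚ K t ^ 5 + 1 = 0 := by
      rw [← map_pow, ← map_one (algebraMap ℚ K), ← map_add, h, map_zero]
    simpa [hy0] using fermat_line_of_pow_five_eq_neg_one hQ hT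
  have hbot : y + y⁻¹ ∉ (⊥ : IntermediateField ℚ K) := fun h => by
    obtain ⟨q, hq⟩ := mem_bot.mp h
    exact hquad (-q) 1 (by rw [map_neg, hq, map_one]; field_simp; ring)
  rcases exists_sq_eq_or_exists_sq_eq_mul_discrim hdeg two_ne_zero hA (b := 4 * t ^ 5 - 1)
    (c := 4 * t ^ 5 - 1) (by simpa [map_ofNat] using fermat_line_inv_add hQ hy0) hbot
    with ⟨s, hs⟩ | ⟨s, hs⟩
  · exact Or.inl ⟨s, by rw [hs]; ring⟩
  · exact Or.inr ⟨s / 5, by rw [div_pow, hs, discrim]; ring⟩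
end

section
/- Let u ∈ ℚ and let r₁, r₂, r₃, r₄ ∈ ℂ be the roots (with multiplicity) of the polynomial f = X⁴ + uX³ + (u+2)X² + uX + 1. Then the discriminant of f satisfies ∏_{1 ≤ i < j ≤ 4} (rᵢ − rⱼ)² = −u²(u − 4)³(3u + 4). Moreover, if t ∈ ℚ with t⁵ ≠ −1 and u = (4t⁵ − 1)/(t⁵ + 1), then −u²(u − 4)³(3u + 4) = 5³·(4t⁵ − 1)²·(16t⁵ + 1)/(t⁵ + 1)⁶. -/
/-! The discriminant of a monic quartic is symmetric in the roots, so by Vieta it is the classical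
polynomial in the coefficients; for `X⁴ + uX³ + (u+2)X² + uX + 1` that polynomial factors as
`-u²(u-4)³(3u+4)`. The substitution `u = (4t⁵-1)/(t⁵+1)` is then a rational-function identity. -/

open Polynomial Finset

/-- The discriminant of `X⁴ + a X³ + b X² + c X + d`, in terms of the coefficients. -/
def quarticDiscr {R : Type*} [CommRing R] (a b c d : R) : R :=
  256 * d ^ 3 - 192 * a * c * d ^ 2 - 128 * b ^ 2 * d ^ 2 + 144 * b * c ^ 2 * d - 27 * c ^ 4
    + 144 * a ^ 2 * b * d ^ 2 - 6 * a ^ 2 * c ^ 2 * d - 80 * a * b ^ 2 * c * d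
    + 18 * a * b * c ^ 3 + 16 * b ^ 4 * d - 4 * b ^ 3 * c ^ 2 - 27 * a ^ 4 * d ^ 2
    + 18 * a ^ 3 * b * c * d - 4 * a ^ 3 * c ^ 3 - 4 * a ^ 2 * b ^ 3 * d + a ^ 2 * b ^ 2 * c ^ 2

theorem Finset.prod_filter_fst_lt_snd_fin_four {M : Type*} [CommMonoid M]
    (f : Fin 4 × Fin 4 → M) :
    ∏ p ∈ univ.filter (fun p : Fin 4 × Fin 4 => p.1 < p.2), f p =
      f (0, 1) * f (0, 2) * f (0, 3) * f (1, 2) * f (1, 3) * f (2, 3) := by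
  rw [show univ.filter (fun p : Fin 4 × Fin 4 => p.1 < p.2) =
    {(0, 1), (0, 2), (0, 3), (1, 2), (1, 3), (2, 3)} from by decide]
  simp [mul_assoc]

theorem coeffs_eq_esymm_of_quartic_eq_prod_X_sub_C {R : Type*} [CommRing R] {a b c d : R}
    {r : Fin 4 → R}
    (h : X ^ 4 + C a * X ^ 3 + C b * X ^ 2 + C c * X + C d = ∏ i, (X - C (r i))) :
    a = -(r 0 + r 1 + r 2 + r 3) ∧
      b = r 0 * r 1 + r 0 * r 2 + r 0 * r 3 + r 1 * r 2 + r 1 * r 3 + r 2 * r 3 ∧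
      c = -(r 0 * r 1 * r 2 + r 0 * r 1 * r 3 + r 0 * r 2 * r 3 + r 1 * r 2 * r 3) ∧
      d = r 0 * r 1 * r 2 * r 3 := by
  have hexpand : ∏ i, (X - C (r i)) =
      X ^ 4 + C (-(r 0 + r 1 + r 2 + r 3)) * X ^ 3
        + C (r 0 * r 1 + r 0 * r 2 + r 0 * r 3 + r 1 * r 2 + r 1 * r 3 + r 2 * r 3) * X ^ 2
        + C (-(r 0 * r 1 * r 2 + r 0 * r 1 * r 3 + r 0 * r 2 * r 3 + r 1 * r 2 * r 3)) * X
        + C (r 0 * r 1 * r 2 * r 3) := by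
    simp only [Fin.prod_univ_four, map_add, map_mul, map_neg]
    ring
  rw [hexpand] at h
  have hcoeff (k : ℕ) := congrArg (coeff · k) h
  simp only [coeff_add, coeff_C_mul, coeff_X_pow, coeff_X, coeff_C] at hcoeff
  exact ⟨by simpa using hcoeff 3, by simpa using hcoeff 2, by simpa using hcoeff 1,
    by simpa using hcoeff 0⟩

theorem prod_sub_sq_eq_quarticDiscr {R : Type*} [CommRing R] {a b c d : R} {r : Fin 4 → R}
    (h : X ^ 4 + C a * X ^ 3 + C b * X ^ 2 + C c * X + C d = ∏ i, (X - C (r i))) :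
    ∏ p ∈ univ.filter (fun p : Fin 4 × Fin 4 => p.1 < p.2), (r p.1 - r p.2) ^ 2 =
      quarticDiscr a b c d := by
  obtain ⟨rfl, rfl, rfl, rfl⟩ := coeffs_eq_esymm_of_quartic_eq_prod_X_sub_C h
  rw [prod_filter_fst_lt_snd_fin_four, quarticDiscr]
  ring

theorem quarticDiscr_palindromic {R : Type*} [CommRing R] (u : R) :
    quarticDiscr u (u + 2) u 1 = -u ^ 2 * (u - 4) ^ 3 * (3 * u + 4) := by
  rw [quarticDiscr]
  ring

/-- The discriminant of `f = X⁴ + uX³ + (u+2)X² + uX + 1` is `-u²(u-4)³(3u+4)`, and for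
`u = (4t⁵-1)/(t⁵+1)` it equals `5³(4t⁵-1)²(16t⁵+1)/(t⁵+1)⁶`. -/
theorem stmt_11 (u : ℚ) (r : Fin 4 → ℂ)
    (hroots : (X ^ 4 + C (u : ℂ) * X ^ 3 + C ((u : ℂ) + 2) * X ^ 2 + C (u : ℂ) * X + 1 :
        ℂ[X]) = ∏ i : Fin 4, (X - C (r i))) :
    (∏ p ∈ Finset.univ.filter (fun p : Fin 4 × Fin 4 => p.1 < p.2),
        (r p.1 - r p.2) ^ 2) =
      -(u : ℂ) ^ 2 * ((u : ℂ) - 4) ^ 3 * (3 * (u : ℂ) + 4) ∧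
    ∀ t : ℚ, t ^ 5 ≠ -1 → u = (4 * t ^ 5 - 1) / (t ^ 5 + 1) →
      -u ^ 2 * (u - 4) ^ 3 * (3 * u + 4) =
        5 ^ 3 * (4 * t ^ 5 - 1) ^ 2 * (16 * t ^ 5 + 1) / (t ^ 5 + 1) ^ 6 := by
  refine ⟨?_, fun t ht hu => ?_⟩
  · rw [← map_one C] at hroots
    rw [prod_sub_sq_eq_quarticDiscr hroots, quarticDiscr_palindromic]
  · have hden : t ^ 5 + 1 ≠ 0 := fun h => ht (eq_neg_of_add_eq_zero_left h)
    subst hu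
    field_simp
    ring
end

section
/- Let u ∈ ℚ and suppose the polynomial f = X⁴ + uX³ + (u+2)X² + uX + 1 is irreducible over ℚ. Let y ∈ ℚ̄ be a root of f, and suppose the extension ℚ(y)/ℚ is Galois (of degree 4). Let ε ∈ ℚ̄ satisfy ε² = u² − 4u. Then −(u − 4)(3u + 4) is a square in the field ℚ(ε); equivalently, the discriminant −u²(u−4)³(3u+4) of f is a square in ℚ(ε). -/
/-!
Dividing `f(y) = 0` by `y²` shows that `z = y + y⁻¹` is a root of `X² + uX + u`, so that
`ε = ±(2z + u)` and `ℚ(ε) = ℚ(z)`. The other root `-u - z` is `y' + y'⁻¹` for a second pair of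
roots `y', y'⁻¹` of `f`, conjugate to `y` as `f` is irreducible. Put `Δ = (y - y⁻¹)(y' - y'⁻¹)`;
then `Δ² = (z² - 4)((u + z)² - 4)`, which Vieta turns into `-(u - 4)(3u + 4)`. An automorphism
`σ` fixing `ε` fixes `z` and `-u - z`, hence sends `y` to `y` or `y⁻¹` and `y'` to `y'` or `y'⁻¹`.
Since `ℚ(y)` is normal, `ℚ(y') = ℚ(y)`, so `σ` fixes `y` exactly when it fixes `y'`; in both cases
`σ Δ = Δ`, and Galois theory for `ℚ̄ / ℚ` puts `Δ` in `ℚ(ε)`.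
-/

open Polynomial IntermediateField

section Field

variable {K : Type*} [Field K]

theorem eq_or_eq_inv_of_add_inv_eq_add_inv {a b : K} (ha : a ≠ 0) (hb : b ≠ 0)
    (h : b + b⁻¹ = a + a⁻¹) : b = a ∨ b = a⁻¹ := by
  have : (b - a) * (b - a⁻¹) = 0 := by
    linear_combination b * h - mul_inv_cancel₀ hb + mul_inv_cancel₀ ha
  simpa [sub_eq_zero] using this

theorem IsAlgClosed.exists_add_inv_eq [IsAlgClosed K] [NeZero (2 : K)] (c : K) :
    ∃ y ≠ 0, y + y⁻¹ = c := by
  obtain ⟨y, hy⟩ := exists_quadratic_eq_zero (one_ne_zero (α := K)) (b := -c) (c := 1)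
    (IsAlgClosed.exists_eq_mul_self _)
  have hy0 : y ≠ 0 := by rintro rfl; simp at hy
  refine ⟨y, hy0, ?_⟩
  field_simp
  linear_combination hy

theorem sq_sub_inv (y : K) (hy : y ≠ 0) : (y - y⁻¹) ^ 2 = (y + y⁻¹) ^ 2 - 4 := by
  field_simp
  ring

theorem aeval_palindromic_quartic {F : Type*} [Field F] [Algebra F K] (u : F) {y : K}
    (hy : y ≠ 0) :
    aeval y (X ^ 4 + C u * X ^ 3 + C (u + 2) * X ^ 2 + C u * X + 1 : F[X]) =
      y ^ 2 * ((y + y⁻¹) ^ 2 + algebraMap F K u * (y + y⁻¹) + algebraMap F K u) := by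
  simp only [map_add, map_mul, map_pow, aeval_X, aeval_C, map_one, map_ofNat]
  field_simp
  ring

theorem sq_sub_four_mul_sq_sub_four {u z z' : K} (hsum : z + z' = -u) (hprod : z * z' = u) :
    (z ^ 2 - 4) * (z' ^ 2 - 4) = -(u - 4) * (3 * u + 4) := by
  linear_combination (z * z' + u + 8) * hprod - 4 * (z + z' - u) * hsum

theorem map_sub_inv_mul_sub_inv_eq {R : Type*} [FunLike R K K] [RingHomClass R K K] (σ : R)
    {a b : K} (ha : a ≠ 0) (hb : b ≠ 0) (hσa : σ (a + a⁻¹) = a + a⁻¹)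
    (hσb : σ (b + b⁻¹) = b + b⁻¹) (hab : σ a = a ↔ σ b = b) :
    σ ((a - a⁻¹) * (b - b⁻¹)) = (a - a⁻¹) * (b - b⁻¹) := by
  have hσa' := eq_or_eq_inv_of_add_inv_eq_add_inv ha ((map_ne_zero σ).mpr ha)
    (by rwa [map_add, map_inv₀] at hσa)
  have hσb' := eq_or_eq_inv_of_add_inv_eq_add_inv hb ((map_ne_zero σ).mpr hb)
    (by rwa [map_add, map_inv₀] at hσb)
  rw [map_mul, map_sub, map_sub, map_inv₀, map_inv₀]
  by_cases h : σ a = a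
  · rw [h, hab.mp h]
  · rw [hσa'.resolve_left h, hσb'.resolve_left (mt hab.mpr h), inv_inv, inv_inv]
    ring

end Field

section Extension

variable {F E : Type*} [Field F] [Field E] [Algebra F E]

theorem AlgHom.apply_eq_self_of_mem_adjoin_simple {σ : E →ₐ[F] E} {x w : E} (hx : σ x = x)
    (hw : w ∈ F⟮x⟯) : σ w = w := by
  have := adjoin_algHom_ext F (φ₁ := σ.comp F⟮x⟯.val) (φ₂ := F⟮x⟯.val) (by simpa using hx)
  exact congr($this ⟨w, hw⟩)

theorem IntermediateField.adjoin_simple_eq_of_minpoly_eq [Normal F E] {x x' : E}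
    [hx : Normal F F⟮x⟯] (h : minpoly F x' = minpoly F x) : F⟮x'⟯ = F⟮x⟯ := by
  obtain ⟨τ, rfl⟩ := (Normal.minpoly_eq_iff_mem_orbit E).mp h
  change F⟮(τ : E →ₐ[F] E) x⟯ = F⟮x⟯
  rw [← Set.image_singleton, ← adjoin_map, normal_iff_forall_map_eq'.mp hx τ]

theorem IntermediateField.mem_adjoin_simple_of_sq_eq_sq [NeZero (2 : E)] (c : F) {ε z : E}
    (h : ε ^ 2 = (2 * z + algebraMap F E c) ^ 2) : z ∈ F⟮ε⟯ := by
  have h2 : 2 * z + algebraMap F E c ∈ F⟮ε⟯ := by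
    rcases sq_eq_sq_iff_eq_or_eq_neg.mp h with h | h
    · exact h ▸ mem_adjoin_simple_self F ε
    · exact neg_neg (2 * z + algebraMap F E c) ▸ h ▸ neg_mem (mem_adjoin_simple_self F ε)
  rw [show z = (2 * z + algebraMap F E c - algebraMap F E c) / 2 by field_simp; ring]
  exact div_mem (sub_mem h2 (algebraMap_mem _ c)) (ofNat_mem _ 2)

theorem IntermediateField.sub_inv_mul_sub_inv_mem [IsGalois F E] (K : IntermediateField F E)
    {y y' : E} (hy : y ≠ 0) (hy' : y' ≠ 0) (hz : y + y⁻¹ ∈ K) (hz' : y' + y'⁻¹ ∈ K)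
    (hadj : F⟮y'⟯ = F⟮y⟯) : (y - y⁻¹) * (y' - y'⁻¹) ∈ K := by
  rw [← InfiniteGalois.fixedField_fixingSubgroup K, mem_fixedField_iff]
  intro σ hσ
  rw [mem_fixingSubgroup_iff] at hσ
  refine map_sub_inv_mul_sub_inv_eq σ hy hy' (hσ _ hz) (hσ _ hz') ⟨fun h ↦ ?_, fun h ↦ ?_⟩
  · exact (σ : E →ₐ[F] E).apply_eq_self_of_mem_adjoin_simple h
      (hadj ▸ mem_adjoin_simple_self F y')
  · exact (σ : E →ₐ[F] E).apply_eq_self_of_mem_adjoin_simple h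
      (hadj ▸ mem_adjoin_simple_self F y)

end Extension

/- `Algebra ℚ (AlgebraicClosure ℚ)` is synthesized as `DivisionRing.toRatAlgebra`, for which the
`IsAlgClosure` instance is not found automatically. -/
theorem isGalois_rat_algebraicClosure : IsGalois ℚ (AlgebraicClosure ℚ) := by
  have : IsAlgClosure ℚ (AlgebraicClosure ℚ) := AlgebraicClosure.instIsAlgClosure ℚ
  have := IsAlgClosure.isAlgebraic (R := ℚ) (K := AlgebraicClosure ℚ)
  exact isGalois_iff.mpr ⟨inferInstance, IsAlgClosure.normal _ _⟩

/-- If `f = X⁴ + uX³ + (u+2)X² + uX + 1` is irreducible over `ℚ`, `y` is a root of `f`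
with `ℚ(y)/ℚ` Galois, and `ε² = u² - 4u`, then `-(u-4)(3u+4)` is a square in `ℚ(ε)`;
equivalently the discriminant `-u²(u-4)³(3u+4)` of `f` is a square in `ℚ(ε)`. -/
theorem stmt_12 (u : ℚ)
    (hirr : Irreducible
      (X ^ 4 + C u * X ^ 3 + C (u + 2) * X ^ 2 + C u * X + 1 : ℚ[X]))
    (y : AlgebraicClosure ℚ)
    (hy : aeval y (X ^ 4 + C u * X ^ 3 + C (u + 2) * X ^ 2 + C u * X + 1 : ℚ[X]) = 0)
    (hgal : IsGalois ℚ ↥(IntermediateField.adjoin ℚ ({y} : Set (AlgebraicClosure ℚ))))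
    (ε : AlgebraicClosure ℚ)
    (hε : ε ^ 2 = algebraMap ℚ (AlgebraicClosure ℚ) (u ^ 2 - 4 * u)) :
    (∃ s : ↥(IntermediateField.adjoin ℚ ({ε} : Set (AlgebraicClosure ℚ))),
      (s : AlgebraicClosure ℚ) ^ 2 =
        algebraMap ℚ (AlgebraicClosure ℚ) (-(u - 4) * (3 * u + 4))) ∧
    (∃ s : ↥(IntermediateField.adjoin ℚ ({ε} : Set (AlgebraicClosure ℚ))),
      (s : AlgebraicClosure ℚ) ^ 2 =
        algebraMap ℚ (AlgebraicClosure ℚ) (-u ^ 2 * (u - 4) ^ 3 * (3 * u + 4))) := by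
  have := isGalois_rat_algebraicClosure
  set v := algebraMap ℚ (AlgebraicClosure ℚ) u
  have hy0 : y ≠ 0 := by rintro rfl; simp at hy
  set z := y + y⁻¹
  have hz : z ^ 2 + v * z + v = 0 := by
    rw [aeval_palindromic_quartic u hy0] at hy
    exact (mul_eq_zero.mp hy).resolve_left (pow_ne_zero 2 hy0)
  obtain ⟨y', hy'0, hy'z⟩ := IsAlgClosed.exists_add_inv_eq (-v - z)
  have hy' : aeval y' (X ^ 4 + C u * X ^ 3 + C (u + 2) * X ^ 2 + C u * X + 1 : ℚ[X]) = 0 := by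
    rw [aeval_palindromic_quartic u hy'0, hy'z]
    linear_combination y' ^ 2 * hz
  have hconj : minpoly ℚ y' = minpoly ℚ y := by
    rw [← minpoly.eq_of_irreducible hirr hy, ← minpoly.eq_of_irreducible hirr hy']
  -- `hgal` is stated for the algebra `DivisionRing.toRatAlgebra` on `ℚ⟮y⟯`, not `algebra'`
  have hadj : ℚ⟮y'⟯ = ℚ⟮y⟯ := adjoin_simple_eq_of_minpoly_eq
    (hx := by convert hgal.to_normal; exact Subsingleton.elim _ _) hconj
  have hzε : z ∈ ℚ⟮ε⟯ := mem_adjoin_simple_of_sq_eq_sq u <| by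
    rw [hε, map_sub, map_pow, map_mul, map_ofNat]
    linear_combination -4 * hz
  have hz'ε : y' + y'⁻¹ ∈ ℚ⟮ε⟯ :=
    hy'z ▸ sub_mem (neg_mem (IntermediateField.algebraMap_mem _ u)) hzε
  have hΔ := sub_inv_mul_sub_inv_mem ℚ⟮ε⟯ hy0 hy'0 hzε hz'ε hadj
  have hΔsq : ((y - y⁻¹) * (y' - y'⁻¹)) ^ 2 =
      algebraMap ℚ (AlgebraicClosure ℚ) (-(u - 4) * (3 * u + 4)) := by
    rw [mul_pow, sq_sub_inv y hy0, sq_sub_inv y' hy'0, hy'z,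
      sq_sub_four_mul_sq_sub_four (u := v) (by ring) (by linear_combination -hz)]
    simp [v]
  refine ⟨⟨⟨_, hΔ⟩, hΔsq⟩,
    ⟨algebraMap ℚ _ (u * (u - 4)), IntermediateField.algebraMap_mem _ _⟩ * ⟨_, hΔ⟩, ?_⟩
  rw [MulMemClass.coe_mul, mul_pow, hΔsq, ← map_pow, ← map_mul]
  congr 1
  ring
end

section
/- Let X, Z ∈ ℚ satisfy 5Z² = 16X⁵ + 1, and write X = a/b with a, b coprime integers and b > 0. Then there exists a natural number c such that b = 5c². -/
/-!
Clearing denominators in `5Z² = 16X⁵ + 1` with `X = a/b` shows that `5b(16a⁵ + b⁵)` is a square.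
Since `2` is not a square modulo `5`, this forces `5 ∣ b`; writing `b = 5b'`, the product
`b'(16a⁵ + 5⁵b'⁵)` is again a square. Its two factors are coprime up to the square factor `16`,
so `b'` is a square.
-/

namespace Int

lemma isSquare_of_isSquare_mul_of_isCoprime {b c : ℤ} (hb : 0 ≤ b) (hbc : IsCoprime b c)
    (h : IsSquare (b * c)) : IsSquare b := by
  obtain ⟨m, hm⟩ := h
  obtain ⟨r, hr | hr⟩ := Int.sq_of_isCoprime hbc (by rw [hm, sq])
  · exact ⟨r, by rw [hr, sq]⟩
  · exact ⟨r, by nlinarith [sq_nonneg r]⟩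

lemma isSquare_of_isSquare_sixteen_mul {x : ℤ} (h : IsSquare (16 * x)) : IsSquare x := by
  obtain ⟨m, hm⟩ := h
  obtain ⟨n, rfl⟩ : (4 : ℤ) ∣ m :=
    (Int.pow_dvd_pow_iff two_ne_zero).mp ⟨x, by linear_combination -hm⟩
  exact ⟨n, by linarith⟩

lemma isSquare_of_isSquare_mul_sixteen_mul_add {b c k : ℤ} (hb : 0 ≤ b) (hbc : IsCoprime b c)
    (h : IsSquare (b * (16 * c + b ^ 5 * k))) : IsSquare b := by
  rcases Int.even_or_odd b with ⟨t, rfl⟩ | hodd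
  · -- for even `b`, `16 ∣ b⁴`, so the second factor is `16` times a number coprime to `b`
    rw [show (t + t) * (16 * c + (t + t) ^ 5 * k) = 16 * ((t + t) * (c + (t + t) * (t ^ 4 * k)))
      by ring] at h
    exact isSquare_of_isSquare_mul_of_isCoprime hb (hbc.add_mul_left_right _)
      (isSquare_of_isSquare_sixteen_mul h)
  · have h16 : IsCoprime b 16 := by
      simpa using (Int.isCoprime_two_right.mpr hodd).pow_right (n := 4)
    rw [show b ^ 5 * k = b * (b ^ 4 * k) by ring] at h
    exact isSquare_of_isSquare_mul_of_isCoprime hb ((h16.mul_right hbc).add_mul_left_right _) h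

end Int

lemma isSquare_five_mul_of_eq {X Z : ℚ} {a b : ℤ} (h : 5 * Z ^ 2 = 16 * X ^ 5 + 1) (hb : b ≠ 0)
    (hX : X = a / b) : IsSquare (5 * (b * (16 * a ^ 5 + b ^ 5))) := by
  rw [← Rat.isSquare_intCast_iff]
  refine ⟨5 * Z * b ^ 3, ?_⟩
  subst hX
  field_simp at h
  push_cast
  linear_combination (-5 * (b : ℚ)) * h

/-- If `5 ∤ b`, then `5 ∣ 16a⁵ + b⁵ ≡ a + b`, whence `16a⁵ + b⁵ ≡ -15b⁵ (mod 25)` and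
`m² ≡ 2b⁶ (mod 5)`; but `2` is not a square modulo `5`. -/
lemma five_dvd_of_five_mul_sq_eq {a b m : ℤ} (h : 5 * m ^ 2 = b * (16 * a ^ 5 + b ^ 5)) :
    5 ∣ b := by
  have mod25 : ∀ a b m : ZMod 25, 5 * m ^ 2 = b * (16 * a ^ 5 + b ^ 5) → b ^ 2 = 0 := by
    decide
  have hb : ((b ^ 2 : ℤ) : ZMod 25) = 0 := by
    push_cast
    exact mod25 a b m (by exact_mod_cast congrArg (Int.cast : ℤ → ZMod 25) h)
  have h25 : (25 : ℤ) ∣ b ^ 2 := (ZMod.intCast_zmod_eq_zero_iff_dvd _ 25).mp hb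
  exact Int.Prime.dvd_pow' (p := 5) (by norm_num) (dvd_trans ⟨5, by norm_num⟩ h25)

/-- If `X, Z ∈ ℚ` satisfy `5Z² = 16X⁵ + 1` and `X = a/b` with `a, b` coprime integers,
`b > 0`, then `b = 5c²` for some natural number `c`. -/
theorem stmt_14 (X Z : ℚ) (h : 5 * Z ^ 2 = 16 * X ^ 5 + 1)
    (a b : ℤ) (hcop : IsCoprime a b) (hb : 0 < b) (hX : X = (a : ℚ) / (b : ℚ)) :
    ∃ c : ℕ, b = 5 * (c : ℤ) ^ 2 := by
  obtain ⟨m, hm⟩ := isSquare_five_mul_of_eq h hb.ne' hX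
  have h5 : (5 : ℤ) ∣ m ^ 2 := ⟨_, by rw [sq, ← hm]⟩
  obtain ⟨m₁, rfl⟩ := Int.Prime.dvd_pow' (p := 5) (by norm_num) h5
  have hm₁ : 5 * m₁ ^ 2 = b * (16 * a ^ 5 + b ^ 5) :=
    mul_left_cancel₀ (by norm_num : (5 : ℤ) ≠ 0) (by linear_combination -hm)
  obtain ⟨b₁, rfl⟩ := five_dvd_of_five_mul_sq_eq hm₁
  have hsq : IsSquare (b₁ * (16 * a ^ 5 + b₁ ^ 5 * 5 ^ 5)) :=
    ⟨m₁, mul_left_cancel₀ (by norm_num : (5 : ℤ) ≠ 0) (by linear_combination -hm₁)⟩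
  obtain ⟨r, rfl⟩ := Int.isSquare_of_isSquare_mul_sixteen_mul_add (by omega)
    (hcop.of_mul_right_right.symm.pow_right) hsq
  exact ⟨r.natAbs, by rw [Int.natAbs_sq, sq]⟩
end

section
/- Let X, Z ∈ ℚ satisfy 5Z² = 16X⁵ + 1, and write X = a/b with a, b coprime integers and b > 0. Then the 5-adic valuation of b is odd; moreover, the 2-adic valuation of b is even, and for every prime p distinct from 2 and 5 the p-adic valuation of b is even. -/
/-!
If a prime `p` divides `b`, then `p ∤ a`, so `v_p(X) = -v_p(b)` and
`v_p(16 X⁵) = 4 v_p(2) - 5 v_p(b) < 0`. Hence `v_p(16 X⁵ + 1) = 4 v_p(2) - 5 v_p(b)`, and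
comparing with `v_p(5 Z²) = v_p(5) + 2 v_p(Z)` gives `v_p(b) ≡ v_p(5) (mod 2)`.
It remains to see that `5 ∣ b`. Otherwise `5` does not divide the denominator of `Z` either
(it would then divide the numerator), so `X` and `Z` reduce modulo `25`, where
`5 u² = 16 x⁵ + 1` has no solution.
-/

-- `16 x⁵ + 1 ≡ 1, 17, 13, 14, 10 (mod 25)` for `x ≡ 0, 1, 2, 3, 4 (mod 5)`.
lemma ZMod.five_mul_sq_ne_sixteen_mul_pow_five_add_one :
    ∀ u x : ZMod 25, 5 * u ^ 2 ≠ 16 * x ^ 5 + 1 := by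
  decide

lemma padicValRat_two_le_one (p : ℕ) [Fact p.Prime] : padicValRat p 2 ≤ 1 := by
  rw [show (2 : ℚ) = (2 : ℕ) by norm_num, padicValRat.of_nat]
  rcases eq_or_ne p 2 with rfl | hp2
  · simp
  · simp [padicValNat_primes hp2]

lemma padicValRat_add_one_of_neg {p : ℕ} [Fact p.Prime] {q : ℚ} (hq : padicValRat p q < 0) :
    padicValRat p (q + 1) = padicValRat p q := by
  refine padicValRat.add_eq_of_lt ?_ ?_ one_ne_zero (by simpa using hq)
  · intro h
    rw [eq_neg_of_add_eq_zero_left h, padicValRat.neg, padicValRat.one] at hq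
    exact hq.false
  · rintro rfl
    simp at hq

lemma padicValRat_div_of_isCoprime_of_dvd {p : ℕ} [hp : Fact p.Prime] {a b : ℤ}
    (hab : IsCoprime a b) (hb : b ≠ 0) (hpb : (p : ℤ) ∣ b) :
    padicValRat p (a / b) = -padicValInt p b := by
  have hpa : ¬ (p : ℤ) ∣ a := fun hpa ↦
    (Nat.prime_iff_prime_int.mp hp.out).not_isUnit (hab.isUnit_of_dvd' hpa hpb)
  have ha : a ≠ 0 := by rintro rfl; exact hpa (dvd_zero _)
  rw [padicValRat.div (by exact_mod_cast ha) (by exact_mod_cast hb), padicValRat.of_int,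
    padicValRat.of_int, padicValInt.eq_zero_of_not_dvd hpa, Nat.cast_zero, zero_sub]

lemma even_padicValInt_iff_of_dvd {p k : ℕ} [Fact p.Prime] {X Z : ℚ}
    (h : k * Z ^ 2 = 16 * X ^ 5 + 1) {a b : ℤ} (hab : IsCoprime a b) (hb : b ≠ 0)
    (hX : X = a / b) (hpb : (p : ℤ) ∣ b) :
    Even (padicValInt p b) ↔ Even (padicValNat p k) := by
  have hXv : padicValRat p X = -padicValInt p b :=
    hX ▸ padicValRat_div_of_isCoprime_of_dvd hab hb hpb
  have hv : 1 ≤ padicValInt p b :=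
    ((padicValInt_dvd_iff 1 b).mp (by simpa using hpb)).resolve_left hb
  have hX0 : X ≠ 0 := by rintro rfl; rw [padicValRat.zero] at hXv; omega
  have h2 := padicValRat_two_le_one p
  have h16X : padicValRat p (16 * X ^ 5) = 4 * padicValRat p 2 - 5 * padicValInt p b := by
    rw [padicValRat.mul (by norm_num) (pow_ne_zero _ hX0), show (16 : ℚ) = 2 ^ 4 by norm_num,
      padicValRat.pow, padicValRat.pow, hXv]
    ring
  have hval : padicValRat p (k * Z ^ 2) = 4 * padicValRat p 2 - 5 * padicValInt p b := by
    rw [h, padicValRat_add_one_of_neg (by rw [h16X]; omega), h16X]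
  have hkZ : (k : ℚ) * Z ^ 2 ≠ 0 := by
    intro h0
    rw [h0, padicValRat.zero] at hval
    omega
  rw [padicValRat.mul (left_ne_zero_of_mul hkZ) (right_ne_zero_of_mul hkZ), padicValRat.pow,
    padicValRat.of_nat] at hval
  simp only [Nat.even_iff]
  omega

lemma five_dvd_of_five_mul_sq_mul_pow_five_eq {a b c d : ℤ} (hcd : IsCoprime c d)
    (E : 5 * c ^ 2 * b ^ 5 = d ^ 2 * (16 * a ^ 5 + b ^ 5)) : 5 ∣ b := by
  by_contra h5b
  have h5 : Prime (5 : ℤ) := Nat.prime_iff_prime_int.mp (by norm_num)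
  have h5d : ¬ 5 ∣ d := by
    rintro ⟨k, rfl⟩
    have : 5 ∣ c ^ 2 * b ^ 5 := (mul_dvd_mul_iff_left (by norm_num : (5 : ℤ) ≠ 0)).mp
      ⟨k ^ 2 * (16 * a ^ 5 + b ^ 5), by linear_combination E⟩
    rcases h5.dvd_or_dvd this with hc | hb
    · exact h5.not_isUnit (hcd.isUnit_of_dvd' (h5.dvd_of_dvd_pow hc) (dvd_mul_right 5 k))
    · exact h5b (h5.dvd_of_dvd_pow hb)
  have isUnit_of_not_dvd : ∀ n : ℤ, ¬ 5 ∣ n → IsUnit (n : ZMod 25) := fun n hn ↦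
    (ZMod.coe_int_isUnit_iff_isCoprime n 25).mpr <| by
      simpa using ((Irreducible.coprime_iff_not_dvd h5.irreducible).mpr hn).pow_left (m := 2)
  obtain ⟨B, hB⟩ := isUnit_of_not_dvd b h5b
  obtain ⟨D, hD⟩ := isUnit_of_not_dvd d h5d
  have E' := congrArg (Int.cast : ℤ → ZMod 25) E
  push_cast at E'
  rw [← hB, ← hD, ← Units.inv_mul_cancel_right (a : ZMod 25) B,
    ← Units.inv_mul_cancel_right (c : ZMod 25) D] at E'
  apply ZMod.five_mul_sq_ne_sixteen_mul_pow_five_add_one (c * ↑D⁻¹) (a * ↑B⁻¹)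
  apply (D ^ 2 * B ^ 5).isUnit.mul_left_cancel
  push_cast
  linear_combination E'

lemma five_dvd_den_of_eq {X Z : ℚ} (h : 5 * Z ^ 2 = 16 * X ^ 5 + 1) {a b : ℤ} (hX : X = a / b) :
    5 ∣ b := by
  rcases eq_or_ne b 0 with rfl | hb
  · exact dvd_zero 5
  refine five_dvd_of_five_mul_sq_mul_pow_five_eq (a := a) (Rat.isCoprime_num_den Z) ?_
  have hZ : Z = Z.num / (Z.den : ℤ) := by exact_mod_cast (Rat.num_div_den Z).symm
  have hd : ((Z.den : ℤ) : ℚ) ≠ 0 := by positivity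
  have hb' : (b : ℚ) ≠ 0 := by exact_mod_cast hb
  rw [hX, hZ] at h
  field_simp at h
  have E : (5 * Z.num ^ 2 * b ^ 5 : ℚ) = (Z.den : ℤ) ^ 2 * (16 * a ^ 5 + b ^ 5) := by
    linear_combination h
  exact_mod_cast E

/-- If `X, Z ∈ ℚ` satisfy `5Z² = 16X⁵ + 1` and `X = a/b` with `a, b` coprime integers,
`b > 0`, then the 5-adic valuation of `b` is odd, the 2-adic valuation of `b` is even,
and the `p`-adic valuation of `b` is even for every prime `p ∉ {2, 5}`. -/
theorem stmt_15 (X Z : ℚ) (h : 5 * Z ^ 2 = 16 * X ^ 5 + 1)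
    (a b : ℤ) (hcop : IsCoprime a b) (hb : 0 < b) (hX : X = (a : ℚ) / (b : ℚ)) :
    Odd (padicValInt 5 b) ∧ Even (padicValInt 2 b) ∧
    ∀ p : ℕ, p.Prime → p ≠ 2 → p ≠ 5 → Even (padicValInt p b) := by
  have parity (p : ℕ) (hp : p.Prime) (hpb : (p : ℤ) ∣ b) :
      Even (padicValInt p b) ↔ Even (padicValNat p 5) :=
    have : Fact p.Prime := ⟨hp⟩
    even_padicValInt_iff_of_dvd (by exact_mod_cast h) hcop hb.ne' hX hpb
  have even_of_ne_five (p : ℕ) (hp : p.Prime) (hp5 : p ≠ 5) : Even (padicValInt p b) := by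
    by_cases hpb : (p : ℤ) ∣ b
    · rw [parity p hp hpb, padicValNat.eq_zero_of_not_dvd
        ((Nat.prime_dvd_prime_iff_eq hp (by norm_num)).not.mpr hp5)]
      exact Even.zero
    · rw [padicValInt.eq_zero_of_not_dvd hpb]
      exact Even.zero
  refine ⟨?_, even_of_ne_five 2 Nat.prime_two (by norm_num),
    fun p hp _ hp5 ↦ even_of_ne_five p hp hp5⟩
  have : Fact (Nat.Prime 5) := ⟨by norm_num⟩
  rw [← Nat.not_even_iff_odd, parity 5 this.out (five_dvd_den_of_eq h hX), padicValNat_self]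
  decide
end

section
/- There do not exist integers a, b, c, d with 5 ∤ ab such that b⁵ − 4a⁵ = 5d² and 16a⁵ + b⁵ = 5c². Indeed, these two congruences already have no simultaneous solution modulo 25 when 5 does not divide ab. -/
/-!
For `5 ∤ x` the fifth power `x⁵ mod 25` depends only on `x mod 5`, while `5v² mod 25` only takes
the values `0, 5, 20`. A finite check over `ZMod 25` shows that `b⁵ - 4a⁵` and `16a⁵ + b⁵` are never
both of the form `5v²` there when `5 ∤ ab`; the integer equations are a special case of the
congruences.
-/

theorem ZMod.natCast_mul_intCast_eq_zero_iff {m : ℕ} (n : ℕ) (hm : m ≠ 0) (a : ℤ) :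
    (m : ZMod (m * n)) * a = 0 ↔ (n : ℤ) ∣ a := by
  rw [← Int.cast_natCast, ← Int.cast_mul, ZMod.intCast_zmod_eq_zero_iff_dvd, Nat.cast_mul,
    mul_dvd_mul_iff_left (by exact_mod_cast hm)]

def fiveSquaresMod25 : Finset (ZMod 25) := Finset.univ.image fun v => 5 * v ^ 2

-- In `ZMod 25`, `5 * x ≠ 0` says exactly that `5 ∤ x`.
theorem not_both_mem_fiveSquaresMod25 : ∀ x y : ZMod 25, 5 * x ≠ 0 → 5 * y ≠ 0 →
    y ^ 5 - 4 * x ^ 5 ∈ fiveSquaresMod25 → 16 * x ^ 5 + y ^ 5 ∉ fiveSquaresMod25 := by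
  decide

theorem five_mul_intCast_ne_zero {a : ℤ} (ha : ¬ 5 ∣ a) : 5 * (a : ZMod 25) ≠ 0 :=
  mt (ZMod.natCast_mul_intCast_eq_zero_iff 5 (by norm_num) a).mp ha

theorem intCast_mem_fiveSquaresMod25 {z d : ℤ} (h : z ≡ 5 * d ^ 2 [ZMOD 25]) :
    (z : ZMod 25) ∈ fiveSquaresMod25 := by
  rw [(ZMod.intCast_eq_intCast_iff _ _ 25).mpr h]
  push_cast
  exact Finset.mem_image_of_mem _ (Finset.mem_univ _)

theorem not_modEq_twentyFive {a b c d : ℤ} (hab : ¬ 5 ∣ a * b)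
    (hd : b ^ 5 - 4 * a ^ 5 ≡ 5 * d ^ 2 [ZMOD 25]) (hc : 16 * a ^ 5 + b ^ 5 ≡ 5 * c ^ 2 [ZMOD 25]) :
    False := by
  have ha := five_mul_intCast_ne_zero fun h => hab (h.mul_right b)
  have hb := five_mul_intCast_ne_zero fun h => hab (h.mul_left a)
  have hd' := intCast_mem_fiveSquaresMod25 hd
  have hc' := intCast_mem_fiveSquaresMod25 hc
  push_cast at hd' hc'
  exact not_both_mem_fiveSquaresMod25 _ _ ha hb hd' hc'

/-- There are no integers `a, b, c, d` with `5 ∤ ab` such that `b⁵ - 4a⁵ = 5d²` and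
`16a⁵ + b⁵ = 5c²`; indeed these equations have no simultaneous solution modulo `25`
when `5 ∤ ab`. -/
theorem stmt_19 :
    (¬ ∃ a b c d : ℤ, ¬ (5 : ℤ) ∣ a * b ∧
      b ^ 5 - 4 * a ^ 5 = 5 * d ^ 2 ∧ 16 * a ^ 5 + b ^ 5 = 5 * c ^ 2) ∧
    (¬ ∃ a b c d : ℤ, ¬ (5 : ℤ) ∣ a * b ∧
      b ^ 5 - 4 * a ^ 5 ≡ 5 * d ^ 2 [ZMOD 25] ∧
      16 * a ^ 5 + b ^ 5 ≡ 5 * c ^ 2 [ZMOD 25]) :=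
  ⟨fun ⟨_, _, _, _, hab, hd, hc⟩ => not_modEq_twentyFive hab (by rw [hd]) (by rw [hc]),
    fun ⟨_, _, _, _, hab, hd, hc⟩ => not_modEq_twentyFive hab hd hc⟩
end
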